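/- (One iteration of the two-stage hard thresholding algorithm; Theorem 5 one-step descent.) Let x* ∈ ℝ^n be k-sparse with every nonzero entry of absolute value 1, and b = Ax*. Suppose A satisfies the RIP of order 2k+l with constant δ_{2k+l} ≤ 0.35 (and hence RIP of each order s ≤ 2k+l with constant at most δ_{2k+l}). Let x^t be a least-squares solution on a support I_t with |I_t| = k, set g = Aᵀ(Ax^t − b) and MD = supp(x*)\I_t. Let T ⊆ I_tᶜ with |T| = l satisfy |g_j| ≥ |g_{j'}| for all j ∈ T, j' ∈ I_tᶜ\T, set J = I_t ∪ T, let z be a least-squares solution on support J, let S ⊆ J with |S| = k satisfy |z_j| ≥ |z_{j'}| for all j ∈ S, j' ∈ J\S, and let x^{t+1} be a least-squares solution on support S. Then f(x^{t+1}) ≤ f(x^t) − 0.0001 · min(l, |MD|). -/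

import Mathlib

open Finset Matrix

noncomputable def nrm {d : ℕ} (x : Fin d → ℝ) : ℝ := Real.sqrt (∑ i, (x i)^2)

noncomputable def supp {d : ℕ} (x : Fin d → ℝ) : Finset (Fin d) := Finset.univ.filter (fun i => x i ≠ 0)

def restr {d : ℕ} (x : Fin d → ℝ) (I : Finset (Fin d)) : Fin d → ℝ := fun i => if i ∈ I then x i else 0

noncomputable def dotp {d : ℕ} (x y : Fin d → ℝ) : ℝ := ∑ i, x i * y i

def RIP {m n : ℕ} (A : Matrix (Fin m) (Fin n) ℝ) (s : ℕ) (δ : ℝ) : Prop :=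
  0 ≤ δ ∧ δ < 1 ∧ ∀ x : Fin n → ℝ, (supp x).card ≤ s →
    (1 - δ) * (nrm x)^2 ≤ (nrm (A.mulVec x))^2 ∧ (nrm (A.mulVec x))^2 ≤ (1 + δ) * (nrm x)^2

def lsSol {m n : ℕ} (A : Matrix (Fin m) (Fin n) ℝ) (b : Fin m → ℝ) (I : Finset (Fin n)) (x : Fin n → ℝ) : Prop :=
  supp x ⊆ I ∧ ∀ i ∈ I, Aᵀ.mulVec (A.mulVec x - b) i = 0

noncomputable def obj {m n : ℕ} (A : Matrix (Fin m) (Fin n) ℝ) (b : Fin m → ℝ) (x : Fin n → ℝ) : ℝ :=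
  (1/2) * (nrm (A.mulVec x - b))^2

/-!
Write `X = supp x*`, `g = Aᵀ (A xᵗ - b)` and `r = min l |MD|`. The residual `A (xᵗ - x*)` has
squared norm at least `(1 - δ) |MD|` by RIP, and it equals `⟪g, xᵗ - x*⟫`, which only sees `MD`; by
Cauchy–Schwarz the gradient mass on `MD`, hence on the top-`l` set `T`, is at least `(1 - δ)² r`.
Since `z` is optimal on `J ⊇ Iₜ ∪ T`, it does at least as well as the gradient step
`xᵗ - g_T / (1 + δ)`, gaining `‖g_T‖² / (2 (1 + δ))`. Truncating `z` to `S` costs at most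
`(1 + δ) ‖z_{J \ S}‖² / 2`. As `A (z - x*)` is orthogonal to the columns in `J`, RIP puts at most a
`δ²` fraction of `‖z - x*‖²` on `J`, the rest being `|X \ J|`; because `S` keeps the largest entries
of `z` and `|X| ≤ |S|`, the dropped mass is at most `δ² r / (1 - δ²)`. For `δ ≤ 0.35` the gain
exceeds the loss by a fixed multiple of `r`.
-/

section Support
variable {d : ℕ}

lemma mem_supp {x : Fin d → ℝ} {i : Fin d} : i ∈ supp x ↔ x i ≠ 0 := by simp [supp]

lemma supp_subset_iff {x : Fin d → ℝ} {E : Finset (Fin d)} : supp x ⊆ E ↔ ∀ i ∉ E, x i = 0 := by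
  simp only [Finset.subset_iff, mem_supp]
  exact ⟨fun h i => not_imp_comm.mp (h (x := i)), fun h i => not_imp_comm.mp (h i)⟩

lemma supp_add_subset (x y : Fin d → ℝ) : supp (x + y) ⊆ supp x ∪ supp y := by
  intro i
  simp only [mem_supp, Finset.mem_union, Pi.add_apply]
  contrapose!
  rintro ⟨hx, hy⟩
  simp [hx, hy]

lemma supp_sub_subset (x y : Fin d → ℝ) : supp (x - y) ⊆ supp x ∪ supp y := by
  intro i
  simp only [mem_supp, Finset.mem_union, Pi.sub_apply]
  contrapose!
  rintro ⟨hx, hy⟩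
  simp [hx, hy]

lemma card_supp_sub_le {x : Fin d → ℝ} {I : Finset (Fin d)} (hx : supp x ⊆ I) (y : Fin d → ℝ) :
    (supp (x - y)).card ≤ (I ∪ supp y).card :=
  Finset.card_le_card ((supp_sub_subset x y).trans (Finset.union_subset_union_left hx))

lemma supp_smul_subset (c : ℝ) (x : Fin d → ℝ) : supp (c • x) ⊆ supp x := by
  intro i
  simp only [mem_supp, Pi.smul_apply, smul_eq_mul]
  exact right_ne_zero_of_mul

lemma supp_restr_subset (x : Fin d → ℝ) (E : Finset (Fin d)) : supp (restr x E) ⊆ E :=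
  supp_subset_iff.mpr fun _ hi => if_neg hi

lemma supp_restr_subset_supp (x : Fin d → ℝ) (E : Finset (Fin d)) :
    supp (restr x E) ⊆ supp x := by
  intro i
  simp only [mem_supp, restr]
  split_ifs <;> simp

lemma sub_restr_of_supp_subset {x : Fin d → ℝ} {J : Finset (Fin d)} (hx : supp x ⊆ J)
    (S : Finset (Fin d)) : x - restr x S = restr x (J \ S) := by
  funext i
  by_cases hS : i ∈ S
  · simp [restr, hS]
  · by_cases hJ : i ∈ J
    · simp [restr, hS, hJ]
    · simp [restr, hS, hJ, supp_subset_iff.mp hx i hJ]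

lemma dotProduct_self_eq_sum_sq (x : Fin d → ℝ) : x ⬝ᵥ x = ∑ i, x i ^ 2 := by
  simp only [dotProduct, sq]

lemma dotProduct_self_nonneg (x : Fin d → ℝ) : 0 ≤ x ⬝ᵥ x := by
  rw [dotProduct_self_eq_sum_sq]
  positivity

lemma dotProduct_restr (x y : Fin d → ℝ) (E : Finset (Fin d)) :
    x ⬝ᵥ restr y E = ∑ i ∈ E, x i * y i := by
  simp only [dotProduct, restr, mul_ite, mul_zero, Finset.sum_ite_mem, Finset.univ_inter]

lemma restr_dotProduct_restr (x : Fin d → ℝ) (E : Finset (Fin d)) :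
    restr x E ⬝ᵥ restr x E = ∑ i ∈ E, x i ^ 2 := by
  rw [dotProduct_restr]
  exact Finset.sum_congr rfl fun i hi => by simp [restr, hi, sq]

lemma nrm_sq (x : Fin d → ℝ) : nrm x ^ 2 = x ⬝ᵥ x := by
  rw [nrm, Real.sq_sqrt (by positivity), dotProduct_self_eq_sum_sq]

end Support

section SignVector
variable {d : ℕ} {xs y : Fin d → ℝ} {I : Finset (Fin d)}

lemma sum_sq_sub_eq_card (hpm : ∀ i, xs i = 0 ∨ |xs i| = 1) (hy : supp y ⊆ I) :
    ∑ i ∈ supp xs \ I, (y i - xs i) ^ 2 = (supp xs \ I).card := by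
  rw [Finset.card_eq_sum_ones, Nat.cast_sum, Nat.cast_one]
  refine Finset.sum_congr rfl fun i hi => ?_
  obtain ⟨hxs, hI⟩ := Finset.mem_sdiff.mp hi
  rw [supp_subset_iff.mp hy i hI, zero_sub, neg_sq, ← sq_abs,
    (hpm i).resolve_left (mem_supp.mp hxs), one_pow]

lemma dotProduct_self_sub_eq_sum_add_card (hpm : ∀ i, xs i = 0 ∨ |xs i| = 1)
    (hy : supp y ⊆ I) :
    (y - xs) ⬝ᵥ (y - xs) = ∑ i ∈ I, (y i - xs i) ^ 2 + (supp xs \ I).card := by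
  have hcompl : ∑ i ∈ Iᶜ, (y i - xs i) ^ 2 = ∑ i ∈ supp xs \ I, (y i - xs i) ^ 2 := by
    refine (Finset.sum_subset (fun i hi => Finset.mem_compl.mpr (Finset.mem_sdiff.mp hi).2)
      fun i hi hni => ?_).symm
    have hxs : xs i = 0 := by
      by_contra h
      exact hni (Finset.mem_sdiff.mpr ⟨mem_supp.mpr h, Finset.mem_compl.mp hi⟩)
    rw [supp_subset_iff.mp hy i (Finset.mem_compl.mp hi), hxs, sub_zero, sq, zero_mul]
  rw [dotProduct_self_eq_sum_sq, ← Finset.sum_add_sum_compl I, ← sum_sq_sub_eq_card hpm hy,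
    ← hcompl]
  rfl

end SignVector

namespace RIP
variable {m n s : ℕ} {A : Matrix (Fin m) (Fin n) ℝ} {δ : ℝ}

lemma lower (h : RIP A s δ) {x : Fin n → ℝ} (hx : (supp x).card ≤ s) :
    (1 - δ) * (x ⬝ᵥ x) ≤ A *ᵥ x ⬝ᵥ A *ᵥ x := by
  simpa only [nrm_sq] using (h.2.2 x hx).1

lemma upper (h : RIP A s δ) {x : Fin n → ℝ} (hx : (supp x).card ≤ s) :
    A *ᵥ x ⬝ᵥ A *ᵥ x ≤ (1 + δ) * (x ⬝ᵥ x) := by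
  simpa only [nrm_sq] using (h.2.2 x hx).2

/-- Polarization: `4 p ⬝ q = ‖p + q‖² - ‖p - q‖²`, before and after applying `A`. -/
lemma dotProduct_sub_le (h : RIP A s δ) {p q : Fin n → ℝ}
    (hpq : (supp p ∪ supp q).card ≤ s) :
    p ⬝ᵥ q - A *ᵥ p ⬝ᵥ A *ᵥ q ≤ δ / 2 * (p ⬝ᵥ p + q ⬝ᵥ q) := by
  have hadd := h.lower ((Finset.card_le_card (supp_add_subset p q)).trans hpq)
  have hsub := h.upper ((Finset.card_le_card (supp_sub_subset p q)).trans hpq)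
  simp only [mulVec_add, mulVec_sub, add_dotProduct, dotProduct_add, sub_dotProduct,
    dotProduct_sub, dotProduct_comm q p, dotProduct_comm (A *ᵥ q) (A *ᵥ p)] at hadd hsub
  linarith

lemma sum_sq_restr_le_of_orthogonal (h : RIP A s δ) {v : Fin n → ℝ} (hv : (supp v).card ≤ s)
    (E : Finset (Fin n)) (horth : A *ᵥ restr v E ⬝ᵥ A *ᵥ v = 0) :
    ∑ i ∈ E, v i ^ 2 ≤ δ ^ 2 * (v ⬝ᵥ v) := by
  have hE : restr v E ⬝ᵥ v = ∑ i ∈ E, v i ^ 2 := by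
    rw [dotProduct_comm, dotProduct_restr]
    simp only [sq]
  have hcard (c : ℝ) : (supp (restr v E) ∪ supp (c • v)).card ≤ s :=
    (Finset.card_le_card (Finset.union_subset (supp_restr_subset_supp v E)
      (supp_smul_subset c v))).trans hv
  have h1 := h.dotProduct_sub_le (hcard 1)
  have hδ := h.dotProduct_sub_le (hcard δ)
  simp only [one_smul, mulVec_smul, dotProduct_smul, smul_dotProduct, smul_eq_mul, horth,
    hE, restr_dotProduct_restr] at h1 hδ
  -- with `p = v_E`, `q = δ • v`, polarization reads `δ ‖v_E‖² ≤ δ / 2 * (‖v_E‖² + δ² ‖v‖²)`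
  rcases h.1.eq_or_lt with rfl | hpos
  · nlinarith
  · nlinarith [dotProduct_self_nonneg v]

end RIP

section LeastSquares
variable {m n : ℕ} {A : Matrix (Fin m) (Fin n) ℝ} {b : Fin m → ℝ}

def grad (A : Matrix (Fin m) (Fin n) ℝ) (b : Fin m → ℝ) (x : Fin n → ℝ) : Fin n → ℝ :=
  Aᵀ *ᵥ (A *ᵥ x - b)

lemma mulVec_dotProduct_residual (A : Matrix (Fin m) (Fin n) ℝ) (b : Fin m → ℝ)
    (x v : Fin n → ℝ) : A *ᵥ v ⬝ᵥ (A *ᵥ x - b) = grad A b x ⬝ᵥ v := by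
  rw [dotProduct_comm, dotProduct_mulVec, grad, mulVec_transpose]

lemma obj_eq_dotProduct (A : Matrix (Fin m) (Fin n) ℝ) (b : Fin m → ℝ) (x : Fin n → ℝ) :
    obj A b x = (A *ᵥ x - b) ⬝ᵥ (A *ᵥ x - b) / 2 := by
  rw [obj, nrm_sq]
  ring

lemma obj_add (A : Matrix (Fin m) (Fin n) ℝ) (b : Fin m → ℝ) (x v : Fin n → ℝ) :
    obj A b (x + v) = obj A b x + grad A b x ⬝ᵥ v + (A *ᵥ v ⬝ᵥ A *ᵥ v) / 2 := by
  rw [obj_eq_dotProduct, obj_eq_dotProduct, mulVec_add, add_sub_right_comm,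
    ← mulVec_dotProduct_residual]
  simp only [add_dotProduct, dotProduct_add, dotProduct_comm (A *ᵥ x - b) (A *ᵥ v)]
  ring

namespace lsSol
variable {I : Finset (Fin n)} {x : Fin n → ℝ}

lemma grad_dotProduct_eq_zero (hx : lsSol A b I x) {v : Fin n → ℝ} (hv : supp v ⊆ I) :
    grad A b x ⬝ᵥ v = 0 := by
  refine Finset.sum_eq_zero fun i _ => ?_
  by_cases hi : i ∈ I
  · rw [show grad A b x i = 0 from hx.2 i hi, zero_mul]
  · rw [supp_subset_iff.mp hv i hi, mul_zero]

/-- Pythagoras: the residual at `x` is orthogonal to `A (y - x)`. -/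
lemma obj_eq_add (hx : lsSol A b I x) {y : Fin n → ℝ} (hy : supp y ⊆ I) :
    obj A b y = obj A b x + (A *ᵥ (y - x) ⬝ᵥ A *ᵥ (y - x)) / 2 := by
  have hyx : supp (y - x) ⊆ I := (supp_sub_subset y x).trans (Finset.union_subset hy hx.1)
  have := obj_add A b x (y - x)
  rwa [add_sub_cancel, hx.grad_dotProduct_eq_zero hyx, add_zero] at this

lemma obj_le (hx : lsSol A b I x) {y : Fin n → ℝ} (hy : supp y ⊆ I) :
    obj A b x ≤ obj A b y := by
  rw [hx.obj_eq_add hy]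
  linarith [dotProduct_self_nonneg (A *ᵥ (y - x))]

end lsSol
end LeastSquares

section Steps
variable {m n s : ℕ} {A : Matrix (Fin m) (Fin n) ℝ} {b : Fin m → ℝ} {δ : ℝ}

/-- Compare `z` with the gradient step `x - (1 + δ)⁻¹ g_T`, which is supported in `J`. -/
lemma lsSol.obj_le_sub_of_gradient_step {J T : Finset (Fin n)} {x z : Fin n → ℝ}
    (hz : lsSol A b J z) (hRIP : RIP A s δ) (hT : T.card ≤ s) (hx : supp x ⊆ J)
    (hTJ : T ⊆ J) :
    obj A b z ≤ obj A b x - (∑ i ∈ T, grad A b x i ^ 2) / (2 * (1 + δ)) := by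
  set gT := restr (grad A b x) T
  set Γ := ∑ i ∈ T, grad A b x i ^ 2
  set c := (1 + δ)⁻¹
  have hv : supp (-c • gT) ⊆ J :=
    (supp_smul_subset _ _).trans ((supp_restr_subset _ T).trans hTJ)
  have hstep := hz.obj_le ((supp_add_subset _ _).trans (Finset.union_subset hx hv))
  have hgT : A *ᵥ gT ⬝ᵥ A *ᵥ gT ≤ (1 + δ) * Γ := by
    rw [show Γ = gT ⬝ᵥ gT from (restr_dotProduct_restr _ _).symm]
    exact hRIP.upper ((Finset.card_le_card (supp_restr_subset _ T)).trans hT)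
  have hdescent : grad A b x ⬝ᵥ gT = Γ := by
    rw [dotProduct_restr]
    simp only [Γ, sq]
  simp only [obj_add, mulVec_smul, smul_dotProduct, dotProduct_smul, smul_eq_mul, hdescent] at hstep
  have hc : c * (1 + δ) = 1 := inv_mul_cancel₀ (by linarith [hRIP.1])
  have hΓ : Γ / (2 * (1 + δ)) = c * Γ / 2 := by
    simp only [c]
    field_simp
  have hQ : c ^ 2 * (A *ᵥ gT ⬝ᵥ A *ᵥ gT) ≤ c * Γ := by
    calc c ^ 2 * (A *ᵥ gT ⬝ᵥ A *ᵥ gT) ≤ c ^ 2 * ((1 + δ) * Γ) :=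
          mul_le_mul_of_nonneg_left hgT (sq_nonneg c)
      _ = c * Γ := by linear_combination c * Γ * hc
  rw [hΓ]
  linarith

lemma lsSol.obj_le_add_of_truncation {J S : Finset (Fin n)} {x z : Fin n → ℝ}
    (hz : lsSol A b J z) (hRIP : RIP A s δ) (hS : S ⊆ J) (hcard : (J \ S).card ≤ s)
    (hx : lsSol A b S x) :
    obj A b x ≤ obj A b z + (1 + δ) / 2 * ∑ i ∈ J \ S, z i ^ 2 := by
  have hzS : supp (restr z S) ⊆ S := supp_restr_subset z S
  have hdrop : restr z S - z = -restr z (J \ S) := by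
    rw [← sub_restr_of_supp_subset hz.1 S, neg_sub]
  have hA := hRIP.upper ((Finset.card_le_card (supp_restr_subset z (J \ S))).trans hcard)
  rw [restr_dotProduct_restr] at hA
  calc obj A b x ≤ obj A b (restr z S) := hx.obj_le hzS
    _ = obj A b z + (A *ᵥ restr z (J \ S) ⬝ᵥ A *ᵥ restr z (J \ S)) / 2 := by
      rw [hz.obj_eq_add (hzS.trans hS), hdrop, mulVec_neg, neg_dotProduct_neg]
    _ ≤ obj A b z + (1 + δ) / 2 * ∑ i ∈ J \ S, z i ^ 2 := by linarith

end Steps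

section TopSubset
variable {α : Type*} {f : α → ℝ}

lemma card_mul_sum_le_card_mul_sum_of_le {s t : Finset α}
    (h : ∀ i ∈ s, ∀ j ∈ t, f i ≤ f j) :
    (t.card : ℝ) * ∑ i ∈ s, f i ≤ s.card * ∑ j ∈ t, f j := by
  calc (t.card : ℝ) * ∑ i ∈ s, f i = ∑ i ∈ s, ∑ _j ∈ t, f i := by
        simp only [Finset.sum_const, nsmul_eq_mul, Finset.mul_sum]
    _ ≤ ∑ _i ∈ s, ∑ j ∈ t, f j :=
        Finset.sum_le_sum fun i hi => Finset.sum_le_sum fun j hj => h i hi j hj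
    _ = s.card * ∑ j ∈ t, f j := by simp only [Finset.sum_const, nsmul_eq_mul]

lemma sum_le_sum_of_le_of_card_le {s t : Finset α} (h : ∀ i ∈ s, ∀ j ∈ t, f i ≤ f j)
    (hf : ∀ j ∈ t, 0 ≤ f j) (hst : s.card ≤ t.card) :
    ∑ i ∈ s, f i ≤ ∑ j ∈ t, f j := by
  rcases t.eq_empty_or_nonempty with rfl | ht
  · rw [Finset.card_eq_zero.mp (Nat.le_zero.mp hst)]
  · have hpos : (0 : ℝ) < t.card := by exact_mod_cast ht.card_pos
    refine le_of_mul_le_mul_left ?_ hpos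
    calc (t.card : ℝ) * ∑ i ∈ s, f i ≤ s.card * ∑ j ∈ t, f j :=
          card_mul_sum_le_card_mul_sum_of_le h
      _ ≤ t.card * ∑ j ∈ t, f j :=
          mul_le_mul_of_nonneg_right (by exact_mod_cast hst) (Finset.sum_nonneg hf)

variable [DecidableEq α]

def IsTopSubset (f : α → ℝ) (T U : Finset α) : Prop :=
  T ⊆ U ∧ ∀ j ∈ T, ∀ j' ∈ U \ T, f j' ≤ f j

lemma exists_isTopSubset (f : α → ℝ) {r : ℕ} {U : Finset α} (hr : r ≤ U.card) :
    ∃ T, IsTopSubset f T U ∧ T.card = r := by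
  induction r with
  | zero => exact ⟨∅, ⟨U.empty_subset, by simp⟩, rfl⟩
  | succ r ih =>
    obtain ⟨T, ⟨hTU, hTtop⟩, hcard⟩ := ih (Nat.le_of_succ_le hr)
    have hne : (U \ T).Nonempty := by
      rw [← Finset.card_pos, Finset.card_sdiff_of_subset hTU]
      omega
    obtain ⟨j, hj, hjmax⟩ := Finset.exists_max_image (U \ T) f hne
    obtain ⟨hjU, hjT⟩ := Finset.mem_sdiff.mp hj
    refine ⟨insert j T, ⟨Finset.insert_subset hjU hTU, fun i hi i' hi' => ?_⟩,
      by rw [Finset.card_insert_of_notMem hjT, hcard]⟩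
    have hi'T : i' ∈ U \ T := Finset.sdiff_subset_sdiff le_rfl (Finset.subset_insert j T) hi'
    rcases Finset.mem_insert.mp hi with rfl | hiT
    · exact hjmax i' hi'T
    · exact hTtop i hiT i' hi'T

namespace IsTopSubset
variable {T U : Finset α}

lemma sum_le (hT : IsTopSubset f T U) {t : Finset α} (ht : t ⊆ U) (hcard : t.card ≤ T.card)
    (hf : ∀ i ∈ U, 0 ≤ f i) : ∑ i ∈ t, f i ≤ ∑ i ∈ T, f i := by
  have hdom : ∑ i ∈ t \ T, f i ≤ ∑ j ∈ T \ t, f j := by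
    refine sum_le_sum_of_le_of_card_le (fun i hi j hj => ?_)
      (fun j hj => hf j (hT.1 (Finset.sdiff_subset hj))) ?_
    · exact hT.2 j (Finset.sdiff_subset hj) i (Finset.sdiff_subset_sdiff ht le_rfl hi)
    · have h1 := Finset.card_inter_add_card_sdiff t T
      have h2 := Finset.card_inter_add_card_sdiff T t
      rw [Finset.inter_comm] at h2
      omega
  rw [← Finset.sum_inter_add_sum_sdiff t T, ← Finset.sum_inter_add_sum_sdiff T t,
    Finset.inter_comm]
  linarith

lemma card_mul_sum_le (hT : IsTopSubset f T U) :
    (T.card : ℝ) * ∑ i ∈ U, f i ≤ U.card * ∑ i ∈ T, f i := by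
  have h := card_mul_sum_le_card_mul_sum_of_le fun i hi j hj => hT.2 j hj i hi
  have hcard : ((U \ T).card : ℝ) + T.card = U.card := by
    exact_mod_cast Finset.card_sdiff_add_card_eq_card hT.1
  rw [← Finset.sum_sdiff hT.1, ← hcard]
  linarith

lemma min_card_mul_sum_le (hT : IsTopSubset f T U) {M : Finset α} (hM : M ⊆ U)
    (hf : ∀ i ∈ U, 0 ≤ f i) :
    min (T.card : ℝ) M.card * ∑ i ∈ M, f i ≤ M.card * ∑ i ∈ T, f i := by
  obtain ⟨t, ht, hcard⟩ := exists_isTopSubset f (min_le_right T.card M.card)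
  calc min (T.card : ℝ) M.card * ∑ i ∈ M, f i = t.card * ∑ i ∈ M, f i := by
        rw [hcard, Nat.cast_min]
    _ ≤ M.card * ∑ i ∈ t, f i := ht.card_mul_sum_le
    _ ≤ M.card * ∑ i ∈ T, f i :=
        mul_le_mul_of_nonneg_left (hT.sum_le (ht.1.trans hM) (hcard ▸ min_le_left _ _) hf)
          (Nat.cast_nonneg _)

lemma sum_sdiff_le (hT : IsTopSubset f T U) {X : Finset α} (hX : (U ∩ X).card ≤ T.card)
    (hf : ∀ i ∈ U, 0 ≤ f i) : ∑ i ∈ U \ T, f i ≤ ∑ i ∈ U \ X, f i := by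
  have h := hT.sum_le Finset.inter_subset_left hX hf
  have h1 := Finset.sum_sdiff (f := f) hT.1
  have h2 := Finset.sum_inter_add_sum_sdiff U X f
  linarith

variable {g : α → ℝ} {X : Finset α}

lemma sum_sdiff_le_of_eqOn (hT : IsTopSubset f T U) (hfg : ∀ i ∉ X, f i = g i)
    (hX : X.card ≤ T.card) (hf : ∀ i ∈ U, 0 ≤ f i) (hg : ∀ i ∈ U, 0 ≤ g i) :
    ∑ i ∈ U \ T, f i ≤ ∑ i ∈ U, g i :=
  calc ∑ i ∈ U \ T, f i ≤ ∑ i ∈ U \ X, f i :=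
        hT.sum_sdiff_le ((Finset.card_le_card Finset.inter_subset_right).trans hX) hf
    _ = ∑ i ∈ U \ X, g i := Finset.sum_congr rfl fun i hi => hfg i (Finset.mem_sdiff.mp hi).2
    _ ≤ ∑ i ∈ U, g i :=
        Finset.sum_le_sum_of_subset_of_nonneg Finset.sdiff_subset fun i hi _ => hg i hi

lemma card_sdiff_mul_sum_sdiff_le_of_eqOn (hT : IsTopSubset f T U) (hfg : ∀ i ∉ X, f i = g i)
    (hX : X.card ≤ T.card) (hf : ∀ i ∈ U, 0 ≤ f i) (hg : ∀ i ∈ U, 0 ≤ g i) :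
    ((X \ U).card : ℝ) * ∑ i ∈ U \ T, f i ≤ (U \ T).card * ∑ i ∈ U, g i := by
  have hcard : (X \ U).card ≤ (T \ X).card := by
    have h1 := Finset.card_inter_add_card_sdiff X U
    have h2 := Finset.card_inter_add_card_sdiff T X
    have h3 : (T ∩ X).card ≤ (X ∩ U).card := Finset.card_le_card fun i hi =>
      Finset.mem_inter.mpr ⟨(Finset.mem_inter.mp hi).2, hT.1 (Finset.mem_inter.mp hi).1⟩
    omega
  calc ((X \ U).card : ℝ) * ∑ i ∈ U \ T, f i ≤ (T \ X).card * ∑ i ∈ U \ T, f i :=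
        mul_le_mul_of_nonneg_right (by exact_mod_cast hcard)
          (Finset.sum_nonneg fun i hi => hf i (Finset.sdiff_subset hi))
    _ ≤ (U \ T).card * ∑ i ∈ T \ X, f i := card_mul_sum_le_card_mul_sum_of_le
        fun i hi j hj => hT.2 j (Finset.mem_sdiff.mp hj).1 i hi
    _ = (U \ T).card * ∑ i ∈ T \ X, g i := by
        rw [Finset.sum_congr rfl fun i hi => hfg i (Finset.mem_sdiff.mp hi).2]
    _ ≤ (U \ T).card * ∑ i ∈ U, g i := mul_le_mul_of_nonneg_left
        (Finset.sum_le_sum_of_subset_of_nonneg (Finset.sdiff_subset.trans hT.1)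
          fun i hi _ => hg i hi) (Nat.cast_nonneg _)

end IsTopSubset
end TopSubset

section SparseRecovery
variable {m n s : ℕ} {A : Matrix (Fin m) (Fin n) ℝ} {b : Fin m → ℝ} {δ : ℝ}
  {xs : Fin n → ℝ}

lemma lsSol.sq_one_sub_mul_card_le {I : Finset (Fin n)} {x : Fin n → ℝ} (hx : lsSol A b I x)
    (hRIP : RIP A s δ) (hb : b = A *ᵥ xs) (hpm : ∀ i, xs i = 0 ∨ |xs i| = 1)
    (hs : (I ∪ supp xs).card ≤ s) :
    (1 - δ) ^ 2 * (supp xs \ I).card ≤ ∑ i ∈ supp xs \ I, grad A b x i ^ 2 := by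
  set M := supp xs \ I
  set g := grad A b x
  set F := A *ᵥ (x - xs) ⬝ᵥ A *ᵥ (x - xs)
  have hres : A *ᵥ (x - xs) = A *ᵥ x - b := by rw [mulVec_sub, hb]
  have hδ : 0 ≤ 1 - δ := by linarith [hRIP.2.1]
  have hlower : (1 - δ) * M.card ≤ F := by
    have h := hRIP.lower ((card_supp_sub_le hx.1 xs).trans hs)
    rw [dotProduct_self_sub_eq_sum_add_card hpm hx.1] at h
    nlinarith [Finset.sum_nonneg fun i (_ : i ∈ I) => sq_nonneg (x i - xs i)]
  -- `g` vanishes on `I` and `x - xs` vanishes off `I ∪ supp xs`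
  have hF : F = ∑ i ∈ M, g i * (x i - xs i) := by
    rw [show F = g ⬝ᵥ (x - xs) by rw [← mulVec_dotProduct_residual, ← hres]]
    refine (Finset.sum_subset (Finset.subset_univ M) fun i _ hi => ?_).symm
    by_cases hI : i ∈ I
    · rw [show g i = 0 from hx.2 i hI, zero_mul]
    · have hxs : xs i = 0 := by
        by_contra h
        exact hi (Finset.mem_sdiff.mpr ⟨mem_supp.mpr h, hI⟩)
      rw [Pi.sub_apply, supp_subset_iff.mp hx.1 i hI, hxs, sub_zero, mul_zero]
  have hCS : F ^ 2 ≤ (∑ i ∈ M, g i ^ 2) * M.card := by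
    rw [hF, ← sum_sq_sub_eq_card hpm hx.1]
    exact Finset.sum_mul_sq_le_sq_mul_sq M g _
  rcases (Nat.cast_nonneg (α := ℝ) M.card).eq_or_lt with h0 | hpos
  · rw [← h0, mul_zero]
    positivity
  · refine le_of_mul_le_mul_left ?_ hpos
    nlinarith [mul_le_mul_of_nonneg_left hlower hδ]

lemma lsSol.sq_one_sub_mul_min_card_le {I T : Finset (Fin n)} {x : Fin n → ℝ}
    (hx : lsSol A b I x) (hRIP : RIP A s δ) (hb : b = A *ᵥ xs)
    (hpm : ∀ i, xs i = 0 ∨ |xs i| = 1) (hs : (I ∪ supp xs).card ≤ s)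
    (hT : IsTopSubset (fun i => grad A b x i ^ 2) T Iᶜ) :
    (1 - δ) ^ 2 * min (T.card : ℝ) (supp xs \ I).card ≤ ∑ i ∈ T, grad A b x i ^ 2 := by
  set M := supp xs \ I
  have hmass := hx.sq_one_sub_mul_card_le hRIP hb hpm hs
  have htop := hT.min_card_mul_sum_le (M := M)
    (fun i hi => Finset.mem_compl.mpr (Finset.mem_sdiff.mp hi).2) fun i _ => sq_nonneg _
  rcases (Nat.cast_nonneg (α := ℝ) M.card).eq_or_lt with h0 | hpos
  · rw [← h0, min_eq_right (Nat.cast_nonneg _), mul_zero]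
    positivity
  · refine le_of_mul_le_mul_left ?_ hpos
    nlinarith [mul_le_mul_of_nonneg_left hmass (le_min (Nat.cast_nonneg T.card) hpos.le)]


lemma lsSol.one_sub_sq_mul_sum_sdiff_le {J S : Finset (Fin n)} {z : Fin n → ℝ}
    (hz : lsSol A b J z) (hRIP : RIP A s δ) (hb : b = A *ᵥ xs)
    (hpm : ∀ i, xs i = 0 ∨ |xs i| = 1) (hs : (J ∪ supp xs).card ≤ s)
    (hS : IsTopSubset (fun i => z i ^ 2) S J) (hX : (supp xs).card ≤ S.card) :
    (1 - δ ^ 2) * ∑ i ∈ J \ S, z i ^ 2 ≤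
      δ ^ 2 * min ((J \ S).card : ℝ) (supp xs \ J).card := by
  set X := supp xs
  set u := z - xs
  set P := ∑ i ∈ J \ S, z i ^ 2
  set U := ∑ i ∈ J, u i ^ 2
  have hzu : ∀ i ∉ X, z i = u i := fun i hi => by
    rw [show u i = z i - xs i from rfl, of_not_not (mt mem_supp.mpr hi), sub_zero]
  have hU : U ≤ δ ^ 2 * (U + (X \ J).card) := by
    have horth : A *ᵥ restr u J ⬝ᵥ A *ᵥ u = 0 := by
      rw [show A *ᵥ u = A *ᵥ z - b by rw [mulVec_sub, hb],
        mulVec_dotProduct_residual, hz.grad_dotProduct_eq_zero (supp_restr_subset u J)]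
    have h := hRIP.sum_sq_restr_le_of_orthogonal ((card_supp_sub_le hz.1 xs).trans hs) J horth
    rwa [dotProduct_self_sub_eq_sum_add_card hpm hz.1] at h
  have hP : P ≤ U :=
    hS.sum_sdiff_le_of_eqOn (g := fun i => u i ^ 2) (fun i hi => by rw [hzu i hi]) hX
      (fun i _ => sq_nonneg _) fun i _ => sq_nonneg _
  have hDP : ((X \ J).card : ℝ) * P ≤ (J \ S).card * U :=
    hS.card_sdiff_mul_sum_sdiff_le_of_eqOn (g := fun i => u i ^ 2) (fun i hi => by rw [hzu i hi])
      hX (fun i _ => sq_nonneg _) fun i _ => sq_nonneg _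
  have hδ : 0 < 1 - δ ^ 2 := by nlinarith [hRIP.1, hRIP.2.1]
  rw [mul_min_of_nonneg _ _ (sq_nonneg δ)]
  rcases (Nat.cast_nonneg (α := ℝ) (X \ J).card).eq_or_lt with h0 | hpos
  · rw [← h0] at hU ⊢
    rw [mul_zero, min_eq_right (by positivity)]
    nlinarith [mul_le_mul_of_nonneg_left hP hδ.le]
  · refine le_min (le_of_mul_le_mul_left ?_ hpos) (by nlinarith)
    nlinarith [mul_le_mul_of_nonneg_left hDP hδ.le]

end SparseRecovery

lemma truncation_loss_add_le_step_gain {δ r Γ P : ℝ} (hδ0 : 0 ≤ δ) (hδ : δ ≤ 0.35) (hr : 0 ≤ r)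
    (hP : 0 ≤ P)
    (hΓ : (1 - δ) ^ 2 * r ≤ Γ) (hPr : (1 - δ ^ 2) * P ≤ δ ^ 2 * r) :
    (1 + δ) / 2 * P + 0.0001 * r ≤ Γ / (2 * (1 + δ)) := by
  have hgain : 0.15 * r ≤ Γ / (2 * (1 + δ)) := by
    rw [le_div_iff₀ (by positivity)]
    nlinarith [mul_nonneg hr (sub_nonneg.mpr hδ)]
  have hloss : (1 + δ) / 2 * P ≤ 0.1 * r := by
    nlinarith [mul_nonneg hr (sub_nonneg.mpr hδ), mul_nonneg hP (sub_nonneg.mpr hδ)]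
  linarith

theorem stmt17 {m n k l : ℕ} (A : Matrix (Fin m) (Fin n) ℝ) (xstar : Fin n → ℝ)
    (hsp : (supp xstar).card ≤ k) (hpm : ∀ i, xstar i = 0 ∨ |xstar i| = 1)
    (b : Fin m → ℝ) (hb : b = A.mulVec xstar)
    (δ : ℝ) (hRIP : RIP A (2*k+l) δ) (hδ : δ ≤ 0.35)
    (xt : Fin n → ℝ) (It : Finset (Fin n)) (hIt : It.card = k) (hxt : lsSol A b It xt)
    (g : Fin n → ℝ) (hg : g = Aᵀ.mulVec (A.mulVec xt - b))
    (MD : Finset (Fin n)) (hMD : MD = supp xstar \ It)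
    (T : Finset (Fin n)) (hTsub : T ⊆ Itᶜ) (hTcard : T.card = l)
    (hTtop : ∀ j ∈ T, ∀ j' ∈ Itᶜ \ T, |g j'| ≤ |g j|)
    (J : Finset (Fin n)) (hJ : J = It ∪ T)
    (z : Fin n → ℝ) (hz : lsSol A b J z)
    (S : Finset (Fin n)) (hSsub : S ⊆ J) (hScard : S.card = k)
    (hStop : ∀ j ∈ S, ∀ j' ∈ J \ S, |z j'| ≤ |z j|)
    (xnext : Fin n → ℝ) (hxnext : lsSol A b S xnext) :
    obj A b xnext ≤ obj A b xt - 0.0001 * min (l : ℝ) (MD.card : ℝ) := by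
  obtain rfl : g = grad A b xt := hg
  have hItJ : It ⊆ J := hJ ▸ Finset.subset_union_left
  have hJcard : J.card = k + l := by
    rw [hJ, Finset.card_union_of_disjoint (Finset.disjoint_right.mpr fun i hi =>
      Finset.mem_compl.mp (hTsub hi)), hIt, hTcard]
  have hJS : (J \ S).card = l := by rw [Finset.card_sdiff_of_subset hSsub]; omega
  have hgrad : (1 - δ) ^ 2 * min (l : ℝ) MD.card ≤ ∑ i ∈ T, grad A b xt i ^ 2 := by
    rw [hMD, ← hTcard]
    exact hxt.sq_one_sub_mul_min_card_le hRIP hb hpm ((Finset.card_union_le _ _).trans (by omega))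
      ⟨hTsub, fun j hj j' hj' => sq_le_sq.mpr (hTtop j hj j' hj')⟩
  have hmass : (1 - δ ^ 2) * ∑ i ∈ J \ S, z i ^ 2 ≤ δ ^ 2 * min (l : ℝ) MD.card := by
    refine (hz.one_sub_sq_mul_sum_sdiff_le hRIP hb hpm ((Finset.card_union_le _ _).trans (by omega))
      ⟨hSsub, fun j hj j' hj' => sq_le_sq.mpr (hStop j hj j' hj')⟩ (by omega)).trans ?_
    rw [hJS, hMD]
    gcongr
  have hstep := hz.obj_le_sub_of_gradient_step hRIP (T := T) (by omega) (hxt.1.trans hItJ)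
    (hJ ▸ Finset.subset_union_right)
  have htrunc := hz.obj_le_add_of_truncation hRIP hSsub (by omega) hxnext
  have := truncation_loss_add_le_step_gain hRIP.1 hδ (by positivity) (by positivity) hgrad hmass
  linarith
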